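/- Let q ≥ 3 and n ≥ 2. If a pair (T⁺, T⁻) of disjoint subsets of V(H(n,q)) satisfies the weight definition of extended perfect bitrade (Definition 3), then it satisfies the cylinder definition (Definition 5): |C_{x,i} ∩ T⁺| = |C_{x,i} ∩ T⁻| ≤ 1 for every vertex x and every coordinate i. -/

import Mathlib

open Finset

/-- Vertex set of the Hamming graph `H(n,q)`: `q`-ary words of length `n`. -/
abbrev HV (n q : ℕ) : Type := Fin n → ZMod q

/-- The radius-`r` sphere around `x` in `H(n,q)`. -/
def hSphere {n q : ℕ} (x : HV n q) (r : ℕ) : Set (HV n q) := {y | hammingDist x y = r}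

/-- The radius-1 ball around `x` in `H(n,q)`. -/
def hBall {n q : ℕ} (x : HV n q) : Set (HV n q) := {z | hammingDist x z ≤ 1}

/-- A code `C` has code distance at least `d`. -/
def minDistGe {n q : ℕ} (C : Set (HV n q)) (d : ℕ) : Prop :=
  ∀ x ∈ C, ∀ y ∈ C, x ≠ y → d ≤ hammingDist x y

/-- A pair of disjoint sets is a perfect bitrade in `H(n,q)` if every radius-1 ball
meets both parts in the same number (at most 1) of vertices. -/
def isPerfectBitrade {n q : ℕ} (Tp Tm : Set (HV n q)) : Prop :=
  Disjoint Tp Tm ∧ ∀ x : HV n q,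
    (hBall x ∩ Tp).ncard = (hBall x ∩ Tm).ncard ∧ (hBall x ∩ Tp).ncard ≤ 1

/-- The weight of a vertex `x` with respect to a set `A`:
`|S₀(x) ∩ A| + |S₁(x) ∩ A| + (2/n)·|S₂(x) ∩ A|`. -/
noncomputable def wt {n q : ℕ} (A : Set (HV n q)) (x : HV n q) : ℚ :=
  ((hSphere x 0 ∩ A).ncard : ℚ) + ((hSphere x 1 ∩ A).ncard : ℚ)
    + (2 / (n : ℚ)) * ((hSphere x 2 ∩ A).ncard : ℚ)

/-- Definition 3 (weight definition of extended perfect bitrade). -/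
def weightBitrade {n q : ℕ} (Tp Tm : Set (HV n q)) : Prop :=
  Disjoint Tp Tm ∧ ∀ x : HV n q, wt Tp x = wt Tm x ∧ wt Tp x ≤ 1

/-- 0-1 indicator function of a set of vertices. -/
noncomputable def chi {n q : ℕ} (T : Set (HV n q)) (x : HV n q) : ℝ :=
  Set.indicator T (fun _ => (1 : ℝ)) x

/-- The adjacency operator of `H(n,q)`: sum of `f` over the neighbours of `x`. -/
def nbrSum {n q : ℕ} [NeZero q] {R : Type*} [AddCommMonoid R]
    (f : HV n q → R) (x : HV n q) : R :=
  ∑ y ∈ Finset.univ.filter (fun y => hammingDist x y = 1), f y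

/-- The `i`-projection of a code `C ⊆ V(H(m+1,q))`. -/
def proj {m q : ℕ} (i : Fin (m + 1)) (C : Set (HV (m + 1) q)) : Set (HV m q) :=
  {x | ∃ a : ZMod q, i.insertNth a x ∈ C}

/-- Definition 2 (projection definition of extended perfect bitrade). -/
def projBitrade {m q : ℕ} (Tp Tm : Set (HV (m + 1) q)) : Prop :=
  minDistGe Tp 4 ∧ minDistGe Tm 4 ∧
    ∀ i : Fin (m + 1),
      isPerfectBitrade (proj i Tp \ proj i Tm) (proj i Tm \ proj i Tp)

/-- `f *ᵢ ψ`, where `ψ ≡ 1`: the function `x ↦ ∑ₐ f(xᵃᵢ)` on `H(m,q)`. -/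
noncomputable def projFun {m q : ℕ} [NeZero q] (i : Fin (m + 1)) (f : HV (m + 1) q → ℂ)
    (x : HV m q) : ℂ :=
  ∑ a : ZMod q, f (i.insertNth a x)

/-- The cylinder `C_{x,i} = ⋃ₐ B(x + a·eᵢ)`. -/
def cylinder {n q : ℕ} (x : HV n q) (i : Fin n) : Set (HV n q) :=
  ⋃ a : ZMod q, hBall (Function.update x i (x i + a))

/-- Definition 5 (cylinder definition of extended perfect bitrade). -/
def cylBitrade {n q : ℕ} (Tp Tm : Set (HV n q)) : Prop :=
  ∀ (x : HV n q) (i : Fin n),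
    (cylinder x i ∩ Tp).ncard = (cylinder x i ∩ Tm).ncard ∧
      (cylinder x i ∩ Tp).ncard ≤ 1

/-- The matrix `S` from Definition 1. -/
noncomputable def Smat (n q : ℕ) : Matrix (Fin 3) (Fin 3) ℝ :=
  !![0, (n : ℝ) * ((q : ℝ) - 1), 0;
     1, (q : ℝ) - 2, ((n : ℝ) - 1) * ((q : ℝ) - 1);
     0, (n : ℝ), (n : ℝ) * ((q : ℝ) - 2)]

/-- Definition 1 (matrix definition of extended perfect bitrade), existence of the
matrix `F` with the required properties. -/
def matrixBitrade {n q : ℕ} [NeZero q] (Tp Tm : Set (HV n q)) : Prop :=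
  ∃ F : HV n q → Fin 3 → ℝ,
    (∀ x, F x 0 = chi Tp x - chi Tm x) ∧
    (∀ x, ∑ k : Fin 3, F x k = 0) ∧
    (∀ x, ({k : Fin 3 | F x k ≠ 0}).ncard ≤ 2) ∧
    (∀ (x : HV n q) (j : Fin 3),
      nbrSum (fun y => F y j) x = ∑ k : Fin 3, F x k * Smat n q k j)

/-- Definition 4 (spectral definition of extended perfect bitrade). -/
def spectralBitrade {n q : ℕ} [NeZero q] (Tp Tm : Set (HV n q)) : Prop :=
  minDistGe Tp 4 ∧ minDistGe Tm 4 ∧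
    ∃ g h : HV n q → ℝ,
      (∀ x, chi Tp x - chi Tm x = g x + h x) ∧
      (∀ x, nbrSum g x = -(n : ℝ) * g x) ∧
      (∀ x, nbrSum h x = ((q : ℝ) - 2) * h x)

/-!
Put `f = 1_{T⁺} - 1_{T⁻}` and fix a coordinate `i`. Every sum that occurs has the form
`∑_y φ(ρ(x, y)) f(y)`, with `ρ` the Hamming distance or the distance to the `i`-line through `x`,
so all the counting reduces to identities between kernels `φ : ℕ → ℚ`.
The quantity `g(x) = |C_{x,i} ∩ T⁺| - |C_{x,i} ∩ T⁻|` is the sum of `f` over the words at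
distance `≤ 1` from the `i`-line through `x`. Summing the condition `w_{T⁺} = w_{T⁻}` along that
line gives `q g(x) + ∑_{j ≠ i} ∑_b g(x[j ↦ b]) = 0`, and every line-sum operator
`g ↦ ∑_b g(·[j ↦ b])` is positive semidefinite, hence `g = 0`. Finally `w ≤ 1` forces minimum
distance `4`, while two words of one cylinder are at distance `≤ 3`.
-/

namespace HammingGraph

open Function

section LineDist

variable {ι β : Type*} [Fintype ι] [DecidableEq ι] [DecidableEq β]

theorem hammingDist_update (x y : ι → β) (j : ι) (b : β) :
    hammingDist (update x j b) y =
      hammingDist (update x j (y j)) y + if b = y j then 0 else 1 := by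
  simp only [hammingDist, card_filter]
  rw [Fintype.sum_eq_add_sum_compl j,
    Fintype.sum_eq_add_sum_compl j fun k => if update x j (y j) k ≠ y k then 1 else 0]
  have hcompl : ∀ k ∈ ({j}ᶜ : Finset ι), (if update x j b k ≠ y k then 1 else 0) =
      if update x j (y j) k ≠ y k then 1 else 0 := fun k hk => by
    rw [update_of_ne (by simpa using hk), update_of_ne (by simpa using hk)]
  rw [sum_congr rfl hcompl]
  by_cases hb : b = y j <;> simp [hb, add_comm]

/-- The distance from `y` to the line `{update x i a | a}`. -/
def lineDist (i : ι) (x y : ι → β) : ℕ :=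
  hammingDist (update x i (y i)) y

theorem hammingDist_update_eq_lineDist_add (i : ι) (x y : ι → β) (a : β) :
    hammingDist (update x i a) y = lineDist i x y + if a = y i then 0 else 1 :=
  hammingDist_update x y i a

theorem lineDist_eq_card (i : ι) (x y : ι → β) :
    lineDist i x y = #{j ∈ univ.erase i | x j ≠ y j} := by
  simp only [lineDist, hammingDist]
  congr 1; ext k
  by_cases hk : k = i
  · subst hk; simp
  · simp [hk]

theorem lineDist_update_of_ne {i j : ι} (hji : j ≠ i) (x y : ι → β) (b : β) :
    lineDist i (update x j b) y = hammingDist (update (update x i (y i)) j b) y := by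
  rw [lineDist, update_comm hji]

theorem lineDist_eq_lineDist_update_add {i j : ι} (hji : j ≠ i) (x y : ι → β) :
    lineDist i x y = lineDist i (update x j (y j)) y + if x j = y j then 0 else 1 := by
  have hx : update (update x i (y i)) j (x j) = update x i (y i) := by
    rw [update_eq_self_iff, update_of_ne hji]
  rw [lineDist_update_of_ne hji, ← hammingDist_update, hx, lineDist]

end LineDist

section LineSum

variable {ι β R : Type*} [DecidableEq ι] [Fintype β]

def lineSum [AddCommMonoid R] (j : ι) (g : (ι → β) → R) (x : ι → β) : R :=
  ∑ b, g (update x j b)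

theorem lineSum_update [AddCommMonoid R] (j : ι) (g : (ι → β) → R) (x : ι → β) (a : β) :
    lineSum j g (update x j a) = lineSum j g x := by
  simp [lineSum]

variable [Fintype ι]

theorem sum_lineSum [AddCommMonoid R] (j : ι) (g : (ι → β) → R) :
    ∑ x, lineSum j g x = Fintype.card β • ∑ x, g x := by
  let e := Equiv.funSplitAt j β
  have hupd : ∀ (a b : β) (r : {k // k ≠ j} → β), update (e.symm (a, r)) j b = e.symm (b, r) := by
    intro a b r; ext k
    by_cases hk : k = j
    · subst hk; simp [e]
    · simp [e, hk]
  rw [← e.symm.sum_comp, ← e.symm.sum_comp, Fintype.sum_prod_type, Fintype.sum_prod_type]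
  simp only [lineSum, hupd, sum_const, card_univ]
  rw [sum_comm]

section Ordered

variable [CommRing R] [LinearOrder R] [IsStrictOrderedRing R] [Nonempty β]

/-- `lineSum j g` is constant along `j`-lines, so `∑ (lineSum j g)² = |β| ∑ g · lineSum j g`. -/
theorem sum_mul_lineSum_nonneg (j : ι) (g : (ι → β) → R) : 0 ≤ ∑ x, g x * lineSum j g x := by
  have key : ∑ x, lineSum j g x ^ 2 = Fintype.card β • ∑ x, g x * lineSum j g x := by
    calc ∑ x, lineSum j g x ^ 2 = ∑ x, lineSum j (fun y => g y * lineSum j g y) x := by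
          refine sum_congr rfl fun x _ => ?_
          show _ = ∑ b, g (update x j b) * lineSum j g (update x j b)
          simp only [lineSum_update]
          rw [sq, ← sum_mul]
          rfl
      _ = _ := sum_lineSum j _
  rw [nsmul_eq_mul] at key
  have hpos : (0 : R) < Fintype.card β := by exact_mod_cast Fintype.card_pos
  exact nonneg_of_mul_nonneg_right (key ▸ sum_nonneg fun x _ => sq_nonneg _) hpos

theorem eq_zero_of_mul_add_sum_lineSum_eq_zero {c : R} (hc : 0 < c) (s : Finset ι)
    {g : (ι → β) → R} (hg : ∀ x, c * g x + ∑ j ∈ s, lineSum j g x = 0) : g = 0 := by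
  have hzero : c * ∑ x, g x ^ 2 + ∑ j ∈ s, ∑ x, g x * lineSum j g x = 0 := by
    rw [sum_comm, mul_sum, ← sum_add_distrib]
    refine sum_eq_zero fun x _ => ?_
    rw [← mul_sum, sq]
    linear_combination g x * hg x
  have hsq : ∑ x, g x ^ 2 = 0 := by
    have h1 : 0 ≤ ∑ j ∈ s, ∑ x, g x * lineSum j g x :=
      sum_nonneg fun j _ => sum_mul_lineSum_nonneg j g
    have h2 : 0 ≤ ∑ x, g x ^ 2 := sum_nonneg fun x _ => sq_nonneg _
    nlinarith
  funext x
  exact pow_eq_zero_iff two_ne_zero |>.mp <|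
    (sum_eq_zero_iff_of_nonneg fun y _ => sq_nonneg (g y)).mp hsq x (mem_univ x)

end Ordered

end LineSum

section Kernels

def lineKernel (q : ℕ) (φ : ℕ → ℚ) (c : ℕ) : ℚ :=
  φ c + (q - 1) * φ (c + 1)

def ballKernel (c : ℕ) : ℚ := if c ≤ 1 then 1 else 0

def weightKernel (n c : ℕ) : ℚ := if c ≤ 1 then 1 else if c = 2 then 2 / n else 0

variable {n q : ℕ}

theorem one_lt_weightKernel_add (hn : 0 < n) {a b : ℕ} (ha : a ≤ 1) (hb : b ≤ 2) :
    1 < weightKernel n a + weightKernel n b := by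
  have : (0 : ℚ) < 2 / n := by positivity
  rcases Nat.lt_or_ge b 2 with hb' | hb'
  · simp [weightKernel, ha, Nat.le_of_lt_succ hb']
  · simp [weightKernel, ha, show b = 2 by omega]; linarith

theorem weightKernel_nonneg (c : ℕ) : 0 ≤ weightKernel n c := by
  unfold weightKernel; split_ifs <;> positivity

/-- Left: the kernel of `q g + ∑_{j ≠ i} lineSum j g` for `g = lineConv i ballKernel f`;
right: `n` times the kernel of the weight condition summed along the `i`-line. -/
theorem mul_ballKernel_add_eq_mul_lineKernel_weightKernel (hn : n ≠ 0) (c : ℕ) :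
    q * ballKernel c +
        (c * lineKernel q ballKernel (c - 1) + (n - 1 - c) * lineKernel q ballKernel c) =
      n * lineKernel q (weightKernel n) c := by
  rcases c with _ | _ | _ | c
  · simp [ballKernel, weightKernel, lineKernel]; ring
  · simp [ballKernel, weightKernel, lineKernel]; field_simp; ring
  · simp [ballKernel, weightKernel, lineKernel]; field_simp
  · simp [ballKernel, weightKernel, lineKernel]

variable [NeZero q]

def distConv (φ : ℕ → ℚ) (f : HV n q → ℚ) (x : HV n q) : ℚ :=
  ∑ y, φ (hammingDist x y) * f y

def lineConv (i : Fin n) (φ : ℕ → ℚ) (f : HV n q → ℚ) (x : HV n q) : ℚ :=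
  ∑ y, φ (lineDist i x y) * f y

theorem sum_update_hammingDist (φ : ℕ → ℚ) (x y : HV n q) (j : Fin n) :
    ∑ b, φ (hammingDist (update x j b) y) = lineKernel q φ (hammingDist (update x j (y j)) y) := by
  conv_lhs => arg 2; ext b; rw [hammingDist_update x y j b]
  rw [Fintype.sum_eq_add_sum_compl (y j)]
  have hcompl : ∀ b ∈ ({y j}ᶜ : Finset (ZMod q)),
      φ (hammingDist (update x j (y j)) y + if b = y j then 0 else 1) =
        φ (hammingDist (update x j (y j)) y + 1) := fun b hb => by
    rw [if_neg (by simpa using hb)]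
  rw [sum_congr rfl hcompl, sum_const, card_compl, card_singleton, ZMod.card, nsmul_eq_mul,
    Nat.cast_sub NeZero.one_le, lineKernel]
  simp

theorem lineSum_distConv (i : Fin n) (φ : ℕ → ℚ) (f : HV n q → ℚ) (x : HV n q) :
    lineSum i (distConv φ f) x = lineConv i (lineKernel q φ) f x := by
  simp only [lineSum, distConv, lineConv]
  rw [sum_comm]
  refine sum_congr rfl fun y _ => ?_
  rw [← sum_mul, sum_update_hammingDist, lineDist]

theorem sum_erase_sum_update_lineDist (i : Fin n) (φ : ℕ → ℚ) (x y : HV n q) :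
    ∑ j ∈ univ.erase i, ∑ b, φ (lineDist i (update x j b) y) =
      lineDist i x y * lineKernel q φ (lineDist i x y - 1) +
        (n - 1 - lineDist i x y) * lineKernel q φ (lineDist i x y) := by
  have hline : ∀ j ∈ univ.erase i, ∑ b, φ (lineDist i (update x j b) y) =
      if x j = y j then lineKernel q φ (lineDist i x y)
      else lineKernel q φ (lineDist i x y - 1) := fun j hj => by
    have hji := ne_of_mem_erase hj
    simp only [lineDist_update_of_ne hji]
    rw [sum_update_hammingDist, ← lineDist_update_of_ne hji,
      lineDist_eq_lineDist_update_add hji x y]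
    split_ifs <;> simp
  have hcard := card_filter_add_card_filter_not (s := univ.erase i) (fun j => x j = y j)
  rw [card_erase_of_mem (mem_univ i), card_univ, Fintype.card_fin, ← lineDist_eq_card] at hcard
  rw [sum_congr rfl hline, sum_ite, sum_const, sum_const, nsmul_eq_mul, nsmul_eq_mul,
    ← lineDist_eq_card]
  have hn : (#{j ∈ univ.erase i | x j = y j} : ℚ) = n - 1 - lineDist i x y := by
    rw [eq_sub_iff_add_eq, ← Nat.cast_add, hcard, Nat.cast_sub i.pos, Nat.cast_one]
  rw [hn]; ring

theorem sum_lineSum_lineConv (i : Fin n) (φ : ℕ → ℚ) (f : HV n q → ℚ) (x : HV n q) :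
    ∑ j ∈ univ.erase i, lineSum j (lineConv i φ f) x =
      lineConv i (fun c => c * lineKernel q φ (c - 1) + (n - 1 - c) * lineKernel q φ c) f x := by
  simp only [lineSum, lineConv]
  rw [sum_congr rfl fun j _ => sum_comm, sum_comm]
  refine sum_congr rfl fun y _ => ?_
  simp only [← sum_mul]
  rw [sum_erase_sum_update_lineDist]

theorem distConv_sub (φ : ℕ → ℚ) (f f' : HV n q → ℚ) (x : HV n q) :
    distConv φ (f - f') x = distConv φ f x - distConv φ f' x := by
  simp [distConv, mul_sub, sum_sub_distrib]

theorem lineConv_sub (i : Fin n) (φ : ℕ → ℚ) (f f' : HV n q → ℚ) (x : HV n q) :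
    lineConv i φ (f - f') x = lineConv i φ f x - lineConv i φ f' x := by
  simp [lineConv, mul_sub, sum_sub_distrib]

theorem mul_lineConv_add_sum_lineSum (hn : n ≠ 0) (i : Fin n) (f : HV n q → ℚ) (x : HV n q) :
    q * lineConv i ballKernel f x + ∑ j ∈ univ.erase i, lineSum j (lineConv i ballKernel f) x =
      n * lineSum i (distConv (weightKernel n) f) x := by
  rw [sum_lineSum_lineConv, lineSum_distConv]
  simp only [lineConv, mul_sum, ← sum_add_distrib]
  refine sum_congr rfl fun y _ => ?_
  linear_combination f y * mul_ballKernel_add_eq_mul_lineKernel_weightKernel (q := q) hn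
    (lineDist i x y)

end Kernels

section Bitrades

theorem ncard_inter_eq_sum {α : Type*} [Fintype α] (S A : Set α) :
    ((S ∩ A).ncard : ℚ) = ∑ y, S.indicator 1 y * A.indicator 1 y := by
  classical
  rw [Set.ncard_eq_toFinset_card']
  simp only [Set.indicator_apply, Pi.one_apply, mul_ite, mul_one, mul_zero, ← ite_and, sum_boole]
  congr 2; ext y; simp [and_comm]

variable {n q : ℕ}

theorem mem_cylinder_iff (x z : HV n q) (i : Fin n) :
    z ∈ cylinder x i ↔ lineDist i x z ≤ 1 := by
  simp only [cylinder, hBall, Set.mem_iUnion, Set.mem_ofPred_eq,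
    hammingDist_update_eq_lineDist_add]
  constructor
  · rintro ⟨a, ha⟩; exact le_of_add_le_left ha
  · intro hz; exact ⟨z i - x i, by simpa using hz⟩

theorem hammingDist_le_three_of_mem_cylinder {x z z' : HV n q} {i : Fin n}
    (hz : z ∈ cylinder x i) (hz' : z' ∈ cylinder x i) : hammingDist z z' ≤ 3 := by
  rw [mem_cylinder_iff] at hz hz'
  have h1 : hammingDist (update x i (z i)) z' ≤ 2 := by
    rw [hammingDist_update_eq_lineDist_add]; split_ifs <;> omega
  have h2 : hammingDist z (update x i (z i)) = lineDist i x z := hammingDist_comm _ _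
  have htri := hammingDist_triangle z (update x i (z i)) z'
  omega

variable [NeZero q]

theorem wt_eq_distConv (A : Set (HV n q)) (x : HV n q) :
    wt A x = distConv (weightKernel n) (A.indicator 1) x := by
  simp only [wt, distConv, ncard_inter_eq_sum, mul_sum, ← sum_add_distrib]
  refine sum_congr rfl fun y _ => ?_
  simp only [hSphere, Set.indicator_apply, Set.mem_ofPred_eq, Pi.one_apply]
  rcases h : hammingDist x y with _ | _ | _ | c <;> simp [weightKernel]

theorem ncard_cylinder_inter (A : Set (HV n q)) (x : HV n q) (i : Fin n) :
    ((cylinder x i ∩ A).ncard : ℚ) = lineConv i ballKernel (A.indicator 1) x := by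
  rw [ncard_inter_eq_sum]
  refine sum_congr rfl fun y _ => ?_
  by_cases hy : y ∈ cylinder x i
  · simp [hy, ballKernel, (mem_cylinder_iff x y i).mp hy]
  · simp [hy, ballKernel, (mem_cylinder_iff x y i).not.mp hy]

theorem add_le_distConv {φ : ℕ → ℚ} (hφ : ∀ c, 0 ≤ φ c) (x : HV n q) {T : Set (HV n q)}
    {y z : HV n q} (hy : y ∈ T) (hz : z ∈ T) (hne : y ≠ z) :
    φ (hammingDist x y) + φ (hammingDist x z) ≤ distConv φ (T.indicator 1) x := by
  have hsub := sum_le_sum_of_subset_of_nonneg (f := fun u => φ (hammingDist x u) * T.indicator 1 u)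
    (subset_univ {y, z})
    fun u _ _ => mul_nonneg (hφ (hammingDist x u)) (Set.indicator_nonneg (fun _ _ => zero_le_one) u)
  rw [sum_pair hne] at hsub
  simpa [distConv, Set.indicator_of_mem hy, Set.indicator_of_mem hz] using hsub

theorem minDistGe_four_of_wt_le_one (hn : 0 < n) {T : Set (HV n q)} (hT : ∀ x, wt T x ≤ 1) :
    minDistGe T 4 := by
  intro y hy z hz hne
  by_contra! hlt
  obtain ⟨k, hk⟩ : ∃ k, y k ≠ z k := ne_iff.mp hne
  have hxy : hammingDist (update y k (z k)) y ≤ 1 := by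
    have := hammingDist_update y y k (z k); simp [hk.symm] at this; omega
  have hxz : hammingDist (update y k (z k)) z ≤ 2 := by
    have := hammingDist_update y z k (y k); simp [hk] at this; omega
  have hwt := hT (update y k (z k))
  rw [wt_eq_distConv] at hwt
  have hpair := add_le_distConv (weightKernel_nonneg (n := n)) (update y k (z k)) hy hz hne
  have hgt := one_lt_weightKernel_add hn hxy hxz
  linarith

theorem ncard_cylinder_inter_le_one {T : Set (HV n q)} (hT : minDistGe T 4) (x : HV n q)
    (i : Fin n) : (cylinder x i ∩ T).ncard ≤ 1 := by
  rw [Set.ncard_le_one (Set.toFinite _)]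
  rintro z ⟨hzc, hz⟩ z' ⟨hzc', hz'⟩
  by_contra hne
  have hfar := hT z hz z' hz' hne
  have hnear := hammingDist_le_three_of_mem_cylinder hzc hzc'
  omega

end Bitrades

end HammingGraph

open HammingGraph

theorem stmt15_general (q n : ℕ) (hq : 3 ≤ q)
    (Tp Tm : Set (HV n q)) (h : weightBitrade Tp Tm) :
    cylBitrade Tp Tm := by
  obtain ⟨-, hw⟩ := h
  have : NeZero q := ⟨by omega⟩
  intro x i
  set f : HV n q → ℚ := Tp.indicator 1 - Tm.indicator 1
  have hf : ∀ y, distConv (weightKernel n) f y = 0 := fun y => by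
    rw [distConv_sub, ← wt_eq_distConv, ← wt_eq_distConv, (hw y).1, sub_self]
  have hg : lineConv i ballKernel f = 0 :=
    eq_zero_of_mul_add_sum_lineSum_eq_zero (c := (q : ℚ)) (by positivity) (univ.erase i) fun y => by
      rw [mul_lineConv_add_sum_lineSum i.pos.ne', lineSum, sum_eq_zero fun a _ => hf _, mul_zero]
  have hcard : ((cylinder x i ∩ Tp).ncard : ℚ) = (cylinder x i ∩ Tm).ncard := by
    rw [← sub_eq_zero, ncard_cylinder_inter, ncard_cylinder_inter, ← lineConv_sub, hg,
      Pi.zero_apply]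
  exact ⟨by exact_mod_cast hcard,
    ncard_cylinder_inter_le_one (minDistGe_four_of_wt_le_one i.pos fun y => (hw y).2) x i⟩

/-- the weight definition (Definition 3) implies
the cylinder definition (Definition 5). -/
theorem stmt15 (q n : ℕ) (hq : 3 ≤ q) (hn : 2 ≤ n)
    (Tp Tm : Set (HV n q)) (h : weightBitrade Tp Tm) :
    cylBitrade Tp Tm :=
  stmt15_general q n hq Tp Tm h
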